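/- The traces of q-deformed Cohn matrices are independent of the parameter n: for all m, n ∈ ℤ and every finite word u over {0,1}, writing P_m(u) = (M, N) and P_n(u) = (M′, N′), one has Tr(M) = Tr(M′), Tr(N) = Tr(N′), and Tr(M·N) = Tr(M′·N′). -/

import Mathlib

open LaurentPolynomial

namespace QMarkovPaper

/-- Evaluation at `q = 1`: the ring homomorphism `ℤ[q^{±1}] → ℤ` sending `q = T 1` to `1`. -/
noncomputable def ev1 : LaurentPolynomial ℤ →+* ℤ :=
  AddMonoidAlgebra.liftNCRingHom (RingHom.id ℤ) 1 (fun _ _ => Commute.all _ _)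

/-- The `q`-Markov equation
`a² + b² + c² = q⁻¹(q² + q + 1)·a·b·c + (q − 1)(q⁻¹ − 1)` in `ℤ[q^{±1}]`. -/
def qMarkovEq (a b c : LaurentPolynomial ℤ) : Prop :=
  a ^ 2 + b ^ 2 + c ^ 2 =
    T (-1) * (T 2 + T 1 + 1) * (a * b * c) + (T 1 - 1) * (T (-1) - 1)

/-- A `q`-Markov triple: a solution of the `q`-Markov equation whose evaluations
at `q = 1` are positive integers. -/
def qMarkovTriple (a b c : LaurentPolynomial ℤ) : Prop :=
  qMarkovEq a b c ∧ 0 < ev1 a ∧ 0 < ev1 b ∧ 0 < ev1 c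

/-- The `q`-integer `[n]_q = (qⁿ − 1)/(q − 1) ∈ ℤ[q^{±1}]`, for `n : ℤ`. -/
noncomputable def qint : ℤ → LaurentPolynomial ℤ
  | Int.ofNat n => ∑ i ∈ Finset.range n, T (i : ℤ)
  | Int.negSucc n => -∑ i ∈ Finset.range (n + 1), T (-(i + 1) : ℤ)

/-- The `q`-deformed Cohn matrix `A(n)_q`. -/
noncomputable def Aq (n : ℤ) : Matrix (Fin 2) (Fin 2) (LaurentPolynomial ℤ) :=
  !![T (2 - n) * qint n, T (1 - n);
     qint n * qint (3 - n) - T (n - 1), T (-1) * qint (3 - n)]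

/-- The `q`-deformed Cohn matrix `B(n)_q = A(n)_q · A(n+1)_q`. -/
noncomputable def Bq (n : ℤ) : Matrix (Fin 2) (Fin 2) (LaurentPolynomial ℤ) :=
  Aq n * Aq (n + 1)

/-- The pair of `q`-deformed Cohn matrices attached to a vertex of the binary tree,
encoded as a word over `{0,1}` (here `false = 0`, `true = 1`):
`P n [] = (A(n)_q, B(n)_q)`; if `P n u = (M, N)` then `P n (u·0) = (M, M·N)` and
`P n (u·1) = (M·N, N)`. -/
noncomputable def P (n : ℤ) (u : List Bool) :
    Matrix (Fin 2) (Fin 2) (LaurentPolynomial ℤ) ×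
      Matrix (Fin 2) (Fin 2) (LaurentPolynomial ℤ) :=
  u.foldl (fun p b => if b then (p.1 * p.2, p.2) else (p.1, p.1 * p.2)) (Aq n, Bq n)

/-! ### Auxiliary lemmas -/

lemma key_qint (k : ℤ) : (T 1 - 1) * qint k = T k - 1 := by
  cases k with
  | ofNat n =>
      show (T 1 - 1) * ∑ i ∈ Finset.range n, T (i : ℤ) = _
      rw [Finset.mul_sum]
      have tele := Finset.sum_range_sub (fun j : ℕ => (T (j : ℤ) : LaurentPolynomial ℤ)) n
      have hterm : ∀ i ∈ Finset.range n, (T 1 - 1) * T (i : ℤ)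
          = (fun j : ℕ => (T (j : ℤ) : LaurentPolynomial ℤ)) (i+1)
            - (fun j : ℕ => (T (j : ℤ) : LaurentPolynomial ℤ)) i := by
        intro i _
        simp only
        push_cast
        rw [sub_mul, ← T_add, one_mul, add_comm]
      rw [Finset.sum_congr rfl hterm, tele]
      simp
  | negSucc n =>
      show (T 1 - 1) * (-∑ i ∈ Finset.range (n+1), T (-(i + 1) : ℤ)) = _
      rw [mul_neg, Finset.mul_sum, ← Finset.sum_neg_distrib]
      have tele := Finset.sum_range_sub (fun j : ℕ => (T (-(j : ℤ)) : LaurentPolynomial ℤ)) (n+1)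
      have hterm : ∀ i ∈ Finset.range (n+1), -((T 1 - 1) * T (-(i + 1) : ℤ))
          = (fun j : ℕ => (T (-(j : ℤ)) : LaurentPolynomial ℤ)) (i+1)
            - (fun j : ℕ => (T (-(j : ℤ)) : LaurentPolynomial ℤ)) i := by
        intro i _
        simp only
        have e1 : (1 : ℤ) + -((i:ℤ)+1) = -(i:ℤ) := by ring
        have e2 : (-(((i:ℕ)+1 : ℕ) : ℤ)) = -((i:ℤ)+1) := by push_cast; ring
        rw [e2, sub_mul, one_mul, ← T_add, e1]
        ring
      rw [Finset.sum_congr rfl hterm, tele]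
      have : (-(((n:ℕ)+1 : ℕ) : ℤ)) = Int.negSucc n := by
        rw [Int.negSucc_eq]; push_cast; ring
      rw [this]
      norm_num

lemma T_one_sub_one_ne : (T 1 - 1 : LaurentPolynomial ℤ) ≠ 0 := by
  intro h
  have h1 : ((T 1 : LaurentPolynomial ℤ) - 1).coeff 1 = 1 := by
    have a2 : (1 : LaurentPolynomial ℤ).coeff 1 = (T 0 : LaurentPolynomial ℤ).coeff 1 := by rw [T_zero]
    show ((T 1 : LaurentPolynomial ℤ).coeff - (1 : LaurentPolynomial ℤ).coeff) 1 = 1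
    rw [Finsupp.sub_apply, a2, T_apply, T_apply]
    norm_num
  rw [h] at h1
  simp at h1

lemma qint_add_one (k : ℤ) : qint (k + 1) = qint k + T k := by
  have h : (T 1 - 1) * qint (k+1) = (T 1 - 1) * (qint k + T k) := by
    rw [key_qint, mul_add, key_qint, T_add]
    ring
  exact mul_left_cancel₀ T_one_sub_one_ne h

lemma qint_mul_T (k : ℤ) : qint (k + 1) = T 1 * qint k + 1 := by
  have h : (T 1 - 1) * qint (k+1) = (T 1 - 1) * (T 1 * qint k + 1) := by
    rw [key_qint, mul_add, mul_comm (T 1 - 1) (T 1 * qint k), mul_assoc,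
      mul_comm (qint k), key_qint, T_add]
    ring
  exact mul_left_cancel₀ T_one_sub_one_ne h

/-- The conjugating matrix. -/
noncomputable def Xc : Matrix (Fin 2) (Fin 2) (LaurentPolynomial ℤ) :=
  !![1, 0; -T 1, T 1]

/-- Its inverse. -/
noncomputable def Yc : Matrix (Fin 2) (Fin 2) (LaurentPolynomial ℤ) :=
  !![1, 0; 1, T (-1)]

lemma fin2_ext {α : Type*} {a b c d a' b' c' d' : α}
    (h1 : a = a') (h2 : b = b') (h3 : c = c') (h4 : d = d') :
    !![a, b; c, d] = !![a', b'; c', d'] := by rw [h1, h2, h3, h4]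

lemma T_one_mul_T_neg_one : (T 1 * T (-1) : LaurentPolynomial ℤ) = 1 := by
  rw [← T_add]; norm_num

lemma Xc_mul_Yc : Xc * Yc = 1 := by
  rw [Xc, Yc, Matrix.mul_fin_two, Matrix.one_fin_two]
  apply fin2_ext
  · ring
  · ring
  · ring
  · linear_combination T_one_mul_T_neg_one

lemma Yc_mul_Xc : Yc * Xc = 1 := by
  rw [Xc, Yc, Matrix.mul_fin_two, Matrix.one_fin_two]
  apply fin2_ext
  · ring
  · ring
  · linear_combination (-1 : LaurentPolynomial ℤ) * T_one_mul_T_neg_one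
  · linear_combination T_one_mul_T_neg_one

lemma trace_of_conj {M M' : Matrix (Fin 2) (Fin 2) (LaurentPolynomial ℤ)}
    (h : M' * Xc = Xc * M) : Matrix.trace M' = Matrix.trace M := by
  calc Matrix.trace M' = Matrix.trace (M' * (Xc * Yc)) := by rw [Xc_mul_Yc, mul_one]
    _ = Matrix.trace (M' * Xc * Yc) := by rw [mul_assoc]
    _ = Matrix.trace (Xc * M * Yc) := by rw [h]
    _ = Matrix.trace (Yc * (Xc * M)) := by rw [Matrix.trace_mul_comm]
    _ = Matrix.trace (Yc * Xc * M) := by rw [mul_assoc]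
    _ = Matrix.trace M := by rw [Yc_mul_Xc, one_mul]

lemma hAstep (n : ℤ) : Aq (n + 1) * Xc = Xc * Aq n := by
  have hq1 := qint_mul_T n
  have hq3 : qint (3 - n) = qint (2 - n) + T (2 - n) := by
    have := qint_add_one (2 - n); rw [show (2:ℤ) - n + 1 = 3 - n by ring] at this; exact this
  have e1 : (2:ℤ) - (n+1) = 1 - n := by ring
  have e2 : (1:ℤ) - (n+1) = -n := by ring
  have e3 : (3:ℤ) - (n+1) = 2 - n := by ring
  have e4 : (n+1:ℤ) - 1 = n := by ring
  rw [Aq, Aq, e1, e2, e3, e4, Xc, Matrix.mul_fin_two, Matrix.mul_fin_two]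
  have hT1n : (T 1 * T (-n) : LaurentPolynomial ℤ) = T (1 - n) := by
    rw [← T_add]; congr 1; try ring
  have hT2n : (T 1 * (T 1 * T (-n)) : LaurentPolynomial ℤ) = T (2 - n) := by
    rw [← T_add, ← T_add]; congr 1; try ring
  have hTn1 : (T n * T (-1) : LaurentPolynomial ℤ) = T (n - 1) := by
    rw [← T_add]; congr 1; try ring
  have h1 : (T 1 * T (-1) : LaurentPolynomial ℤ) = 1 := T_one_mul_T_neg_one
  rw [hq1, hq3, ← hT1n, ← hT2n, ← hTn1]
  apply fin2_ext
  · ring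
  · ring
  · linear_combination (T n - qint (2-n) : LaurentPolynomial ℤ) * h1
  · linear_combination (-(T 1 ^ 2 * T (-n)) : LaurentPolynomial ℤ) * h1

lemma hBstep (n : ℤ) : Bq (n + 1) * Xc = Xc * Bq n := by
  rw [Bq, Bq, mul_assoc, hAstep (n+1), ← mul_assoc, hAstep n, mul_assoc]

lemma fold_conj (u : List Bool) :
    ∀ p q : Matrix (Fin 2) (Fin 2) (LaurentPolynomial ℤ) ×
      Matrix (Fin 2) (Fin 2) (LaurentPolynomial ℤ),
    p.1 * Xc = Xc * q.1 → p.2 * Xc = Xc * q.2 →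
    (u.foldl (fun p b => if b then (p.1 * p.2, p.2) else (p.1, p.1 * p.2)) p).1 * Xc
      = Xc * (u.foldl (fun p b => if b then (p.1 * p.2, p.2) else (p.1, p.1 * p.2)) q).1 ∧
    (u.foldl (fun p b => if b then (p.1 * p.2, p.2) else (p.1, p.1 * p.2)) p).2 * Xc
      = Xc * (u.foldl (fun p b => if b then (p.1 * p.2, p.2) else (p.1, p.1 * p.2)) q).2 := by
  induction u with
  | nil => intro p q h1 h2; exact ⟨h1, h2⟩
  | cons b v ih =>
      intro p q h1 h2
      have hmul : (p.1 * p.2) * Xc = Xc * (q.1 * q.2) := by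
        rw [mul_assoc, h2, ← mul_assoc, h1, mul_assoc]
      cases b
      · simpa using ih (p.1, p.1 * p.2) (q.1, q.1 * q.2) h1 hmul
      · simpa using ih (p.1 * p.2, p.2) (q.1 * q.2, q.2) hmul h2

lemma P_conj (n : ℤ) (u : List Bool) :
    (P (n+1) u).1 * Xc = Xc * (P n u).1 ∧ (P (n+1) u).2 * Xc = Xc * (P n u).2 :=
  fold_conj u (Aq (n+1), Bq (n+1)) (Aq n, Bq n) (hAstep n) (hBstep n)

/-- All three traces, bundled. -/
noncomputable def tr3 (n : ℤ) (u : List Bool) :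
    LaurentPolynomial ℤ × LaurentPolynomial ℤ × LaurentPolynomial ℤ :=
  (Matrix.trace (P n u).1, Matrix.trace (P n u).2, Matrix.trace ((P n u).1 * (P n u).2))

lemma tr3_step (n : ℤ) (u : List Bool) : tr3 (n+1) u = tr3 n u := by
  obtain ⟨h1, h2⟩ := P_conj n u
  have hmul : ((P (n+1) u).1 * (P (n+1) u).2) * Xc = Xc * ((P n u).1 * (P n u).2) := by
    rw [mul_assoc, h2, ← mul_assoc, h1, mul_assoc]
  unfold tr3
  rw [trace_of_conj h1, trace_of_conj h2, trace_of_conj hmul]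

lemma tr3_eq_zero (u : List Bool) : ∀ n : ℤ, tr3 n u = tr3 0 u := by
  intro n
  induction n using Int.induction_on with
  | zero => rfl
  | succ k ih => rw [tr3_step, ih]
  | pred k ih =>
      have := tr3_step (-(k:ℤ) - 1) u
      rw [show (-(k:ℤ) - 1) + 1 = -(k:ℤ) by ring] at this
      rw [← this]
      exact ih

/-- The traces of the `q`-deformed Cohn matrices do not depend on
the parameter `n`. -/
theorem trace_P_independent_of_n (m n : ℤ) (u : List Bool) :
    Matrix.trace (P m u).1 = Matrix.trace (P n u).1 ∧
      Matrix.trace (P m u).2 = Matrix.trace (P n u).2 ∧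
      Matrix.trace ((P m u).1 * (P m u).2) = Matrix.trace ((P n u).1 * (P n u).2) := by
  have h : tr3 m u = tr3 n u := (tr3_eq_zero u m).trans (tr3_eq_zero u n).symm
  have h1 := congrArg Prod.fst h
  have h2 := congrArg (fun p => p.2.1) h
  have h3 := congrArg (fun p => p.2.2) h
  exact ⟨h1, h2, h3⟩

end QMarkovPaper
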